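/- arXiv:2508.14671 — 2 statements merged into one kernel-verified Lean document; each statement's English description precedes it below -/
import Mathlib

section
/- Let Γ = (G,I,O,λ) be a labelled open graph and let S ⊆ O, i.e. all neighbours of the new vertex are outputs. Let Γ' be the YZ-insertion of a fresh vertex z with neighbourhood S into Γ. If Γ has a Pauli flow, then Γ' has a Pauli flow. -/
open scoped Classical
noncomputable section

inductive MLabel : Type
  | X | Y | Z | XY | XZ | YZ
  deriving DecidableEq

variable {V : Type*}

/-- The odd neighbourhood of a set `A`: vertices with an odd number of neighbours in `A`. -/
def oddN (G : SimpleGraph V) (A : Set V) : Set V :=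
  {v | Odd ((A ∩ G.neighborSet v).ncard)}

/-- The closed odd neighbourhood of a set `A`. -/
def cOddN (G : SimpleGraph V) (A : Set V) : Set V :=
  symmDiff (oddN G A) A

/-- A Pauli flow on the labelled open graph `(G, I, O, lab)`. -/
structure IsPauliFlow (G : SimpleGraph V) (I O : Set V) (lab : V → MLabel)
    (c : V → Set V) (prec : V → V → Prop) : Prop where
  corr_sub : ∀ u, u ∉ O → c u ⊆ Iᶜ
  irrefl : ∀ u, ¬ prec u u
  trans : ∀ ⦃a b d⦄, prec a b → prec b d → prec a d
  p1 : ∀ u, u ∉ O → ∀ v ∈ c u, v ∉ O → u ≠ v →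
    lab v ∉ ({MLabel.X, MLabel.Y} : Set MLabel) → prec u v
  p2 : ∀ u, u ∉ O → ∀ v ∈ oddN G (c u), v ∉ O → u ≠ v →
    lab v ∉ ({MLabel.Y, MLabel.Z} : Set MLabel) → prec u v
  p3 : ∀ u, u ∉ O → ∀ v, v ∉ O → ¬ prec u v → u ≠ v → lab v = MLabel.Y →
    v ∉ cOddN G (c u)
  p4 : ∀ u, u ∉ O → lab u = MLabel.XY → u ∉ c u ∧ u ∈ oddN G (c u)
  p5 : ∀ u, u ∉ O → lab u = MLabel.XZ → u ∈ c u ∧ u ∈ oddN G (c u)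
  p6 : ∀ u, u ∉ O → lab u = MLabel.YZ → u ∈ c u ∧ u ∉ oddN G (c u)
  p7 : ∀ u, u ∉ O → lab u = MLabel.X → u ∈ oddN G (c u)
  p8 : ∀ u, u ∉ O → lab u = MLabel.Z → u ∈ c u
  p9 : ∀ u, u ∉ O → lab u = MLabel.Y → u ∈ cOddN G (c u)

/-- `A` is focused over `S`. -/
def FocusedOver (G : SimpleGraph V) (lab : V → MLabel) (A S : Set V) : Prop :=
  (∀ w ∈ S ∩ A, lab w ∈ ({MLabel.XY, MLabel.X, MLabel.Y} : Set MLabel)) ∧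
  (∀ w ∈ S ∩ oddN G A, lab w ∈ ({MLabel.XZ, MLabel.YZ, MLabel.Y, MLabel.Z} : Set MLabel)) ∧
  (∀ w ∈ S, lab w = MLabel.Y → w ∉ cOddN G A)

/-- A focused Pauli flow. -/
def IsFocusedPauliFlow (G : SimpleGraph V) (I O : Set V) (lab : V → MLabel)
    (c : V → Set V) (prec : V → V → Prop) : Prop :=
  IsPauliFlow G I O lab c prec ∧ ∀ v, v ∉ O → FocusedOver G lab (c v) (Oᶜ \ {v})

def HasPauliFlow (G : SimpleGraph V) (I O : Set V) (lab : V → MLabel) : Prop :=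
  ∃ c prec, IsPauliFlow G I O lab c prec

/-- The graph that results from inserting a fresh vertex (`none`) with
neighbourhood `S` into `G`. -/
def insertGraph (G : SimpleGraph V) (S : Set V) : SimpleGraph (Option V) where
  Adj a b := match a, b with
    | some x, some y => G.Adj x y
    | some x, none => x ∈ S
    | none, some y => y ∈ S
    | none, none => False
  symm := ⟨by
    rintro (_ | x) (_ | y) h
    · exact h
    · exact h
    · exact h
    · exact G.adj_symm h⟩
  loopless := ⟨by
    rintro (_ | x) h
    · exact h
    · exact G.irrefl h⟩

/-- The measurement labelling after inserting a fresh vertex measured `ℓ`. -/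
def insertLab (lab : V → MLabel) (ℓ : MLabel) : Option V → MLabel
  | none => ℓ
  | some v => lab v

/-- The set 𝒳 of X-like internal vertices. -/
def mX (I O : Set V) (lab : V → MLabel) : Set V :=
  {v | v ∉ I ∧ v ∉ O ∧ lab v ∈ ({MLabel.XY, MLabel.X, MLabel.Y} : Set MLabel)}

/-- The set ℒ of planar-measured internal vertices. -/
def mL (I O : Set V) (lab : V → MLabel) : Set V :=
  {v | v ∉ I ∧ v ∉ O ∧ lab v ∈ ({MLabel.XY, MLabel.XZ, MLabel.YZ} : Set MLabel)}


lemma insert_nbr_some (G : SimpleGraph V) (S : Set V) (A : Set V) (y : V) :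
    (some '' A) ∩ (insertGraph G S).neighborSet (some y)
      = some '' (A ∩ G.neighborSet y) := by
  ext o
  rcases o with _ | x
  · simp [SimpleGraph.neighborSet, insertGraph]
  · simp only [Set.mem_inter_iff, Set.mem_image, Option.some.injEq,
      SimpleGraph.mem_neighborSet]
    constructor
    · rintro ⟨⟨a, ha, rfl⟩, hadj⟩
      exact ⟨a, ⟨ha, hadj⟩, rfl⟩
    · rintro ⟨a, ⟨ha, hadj⟩, rfl⟩
      exact ⟨⟨a, ha, rfl⟩, hadj⟩

lemma oddN_insert_some (G : SimpleGraph V) (S : Set V) (A : Set V) (y : V) :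
    some y ∈ oddN (insertGraph G S) (some '' A) ↔ y ∈ oddN G A := by
  simp only [oddN, Set.mem_setOf_eq, insert_nbr_some,
    Set.ncard_image_of_injective _ (Option.some_injective V)]

lemma cOddN_insert_some (G : SimpleGraph V) (S : Set V) (A : Set V) (y : V) :
    some y ∈ cOddN (insertGraph G S) (some '' A) ↔ y ∈ cOddN G A := by
  simp only [cOddN, Set.mem_symmDiff, oddN_insert_some, Set.mem_image,
    Option.some.injEq, exists_eq_right]

lemma oddN_insert_none (G : SimpleGraph V) (S : Set V) (y : V) :
    some y ∈ oddN (insertGraph G S) {none} ↔ y ∈ S := by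
  simp only [oddN, Set.mem_setOf_eq]
  by_cases hy : y ∈ S
  · have : ({none} : Set (Option V)) ∩ (insertGraph G S).neighborSet (some y) = {none} := by
      ext o; rcases o with _ | x <;>
        simp [SimpleGraph.neighborSet, insertGraph, hy]
    simp [this, hy]
  · have : ({none} : Set (Option V)) ∩ (insertGraph G S).neighborSet (some y) = ∅ := by
      ext o; rcases o with _ | x <;>
        simp [SimpleGraph.neighborSet, insertGraph, hy]
    simp [this, hy]

lemma oddN_insert_none_none (G : SimpleGraph V) (S : Set V) :
    none ∉ oddN (insertGraph G S) {none} := by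
  have : ({none} : Set (Option V)) ∩ (insertGraph G S).neighborSet none = ∅ := by
    ext o; rcases o with _ | x <;> simp [SimpleGraph.neighborSet, insertGraph]
  simp [oddN, this]

/-- a YZ-measured vertex whose neighbours are all outputs can
always be inserted while preserving the existence of Pauli flow. -/
theorem yz_insertion_outputs_preserves_pauli_flow {V : Type*} [Fintype V]
    (G : SimpleGraph V) (I O : Set V) (lab : V → MLabel)
    (S : Set V) (hS : S ⊆ O)
    (h : HasPauliFlow G I O lab) :
    HasPauliFlow (insertGraph G S) (some '' I) (some '' O)
      (insertLab lab MLabel.YZ) := by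
  obtain ⟨c, prec, hpf⟩ := h
  refine ⟨fun u => match u with
      | none => {none}
      | some x => some '' c x,
    fun a b => match a, b with
      | some x, some y => prec x y
      | some _, none => True
      | none, _ => False, ?_⟩
  have hmO : ∀ x : V, (some x : Option V) ∉ some '' O ↔ x ∉ O := by
    intro x; simp
  have hmI : ∀ x : V, (some x : Option V) ∉ some '' I ↔ x ∉ I := by
    intro x; simp
  constructor
  · -- corr_sub
    rintro (_ | x) hu
    · rintro o ho
      simp only [Set.mem_singleton_iff] at ho
      subst ho
      simp
    · rintro _ ⟨y, hy, rfl⟩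
      simp only [Set.mem_compl_iff, Set.mem_image, Option.some.injEq, exists_eq_right]
      exact hpf.corr_sub x ((hmO x).mp hu) hy
  · -- irrefl
    rintro (_ | x)
    · exact fun h => h
    · exact hpf.irrefl x
  · -- trans
    rintro (_ | a) (_ | b) (_ | d) h1 h2
    · exact h1.elim
    · exact h1.elim
    · exact h1.elim
    · exact h1.elim
    · exact trivial
    · exact h2.elim
    · exact trivial
    · exact hpf.trans h1 h2
  · -- p1
    rintro (_ | x) hu (_ | y) hv hvO huv hlab
    · exact absurd rfl huv
    · exact absurd hv (by simp)
    · exact trivial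
    · simp only [Set.mem_image, Option.some.injEq, exists_eq_right] at hv
      exact hpf.p1 x ((hmO x).mp hu) y hv ((hmO y).mp hvO)
        (fun h => huv (by rw [h])) hlab
  · -- p2
    rintro (_ | x) hu (_ | y) hv hvO huv hlab
    · exact absurd rfl huv
    · rw [oddN_insert_none] at hv
      exact absurd (Set.mem_image_of_mem some (hS hv)) hvO
    · exact trivial
    · rw [oddN_insert_some] at hv
      exact hpf.p2 x ((hmO x).mp hu) y hv ((hmO y).mp hvO)
        (fun h => huv (by rw [h])) hlab
  · -- p3
    rintro (_ | x) hu (_ | y) hvO hp huv hY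
    · exact absurd rfl huv
    · intro hmem
      simp only [cOddN, Set.mem_symmDiff, Set.mem_singleton_iff, oddN_insert_none,
        reduceCtorEq] at hmem
      rcases hmem with ⟨hyS, _⟩ | ⟨h1, _⟩
      · exact hvO (Set.mem_image_of_mem some (hS hyS))
      · exact h1
    · exact absurd hY (by simp [insertLab])
    · rw [cOddN_insert_some]
      exact hpf.p3 x ((hmO x).mp hu) y ((hmO y).mp hvO) hp
        (fun h => huv (by rw [h])) hY
  · -- p4
    rintro (_ | x) hu hlab
    · exact absurd hlab (by simp [insertLab])
    · obtain ⟨h1, h2⟩ := hpf.p4 x ((hmO x).mp hu) hlab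
      exact ⟨by simpa using h1, (oddN_insert_some G S (c x) x).mpr h2⟩
  · -- p5
    rintro (_ | x) hu hlab
    · exact absurd hlab (by simp [insertLab])
    · obtain ⟨h1, h2⟩ := hpf.p5 x ((hmO x).mp hu) hlab
      exact ⟨Set.mem_image_of_mem some h1, (oddN_insert_some G S (c x) x).mpr h2⟩
  · -- p6
    rintro (_ | x) hu _
    · exact ⟨rfl, oddN_insert_none_none G S⟩
    · obtain ⟨h1, h2⟩ := hpf.p6 x ((hmO x).mp hu) (by assumption)
      exact ⟨Set.mem_image_of_mem some h1,
        fun hc => h2 ((oddN_insert_some G S (c x) x).mp hc)⟩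
  · -- p7
    rintro (_ | x) hu hlab
    · exact absurd hlab (by simp [insertLab])
    · exact (oddN_insert_some G S (c x) x).mpr (hpf.p7 x ((hmO x).mp hu) hlab)
  · -- p8
    rintro (_ | x) hu hlab
    · exact absurd hlab (by simp [insertLab])
    · exact Set.mem_image_of_mem some (hpf.p8 x ((hmO x).mp hu) hlab)
  · -- p9
    rintro (_ | x) hu hlab
    · exact absurd hlab (by simp [insertLab])
    · exact (cOddN_insert_some G S (c x) x).mpr (hpf.p9 x ((hmO x).mp hu) hlab)

end
end

section
/- Let Γ = (G,I,O,λ) be a labelled open graph with |I|=|O| that has a Pauli flow. Then the focused Pauli flow correction function on Γ is unique: if (c₁,≺₁) and (c₂,≺₂) are focused Pauli flows on Γ, then c₁(v) = c₂(v) for all v ∈ V∖O. -/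
open scoped Classical
noncomputable section

variable {V : Type*}

section Aux

variable [Fintype V]

/-- Indicator vector of a set, as a `ZMod 2` vector indexed by `Iᶜ`. -/
def indVec (I : Set V) (A : Set V) : ↥(Iᶜ) → ZMod 2 := fun v => if ↑v ∈ A then 1 else 0

/-- Row of the flow-condition matrix for a vertex `w`. -/
def rowOf (G : SimpleGraph V) (lab : V → MLabel) (w v : V) : ZMod 2 :=
  match lab w with
  | MLabel.XZ | MLabel.YZ | MLabel.Z => if v = w then 1 else 0
  | MLabel.XY | MLabel.X => if G.Adj w v then 1 else 0
  | MLabel.Y => if (G.Adj w v ∨ v = w) then 1 else 0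

/-- The flow-condition matrix. -/
def flowMat (G : SimpleGraph V) (I O : Set V) (lab : V → MLabel) :
    Matrix ↥(Oᶜ) ↥(Iᶜ) (ZMod 2) := fun w v => rowOf G lab ↑w ↑v

/-- The target value of a row evaluated at a set `A`. -/
def tval (G : SimpleGraph V) (lab : V → MLabel) (A : Set V) (w : V) : ZMod 2 :=
  match lab w with
  | MLabel.XZ | MLabel.YZ | MLabel.Z => if w ∈ A then 1 else 0
  | MLabel.XY | MLabel.X => if w ∈ oddN G A then 1 else 0
  | MLabel.Y => if w ∈ cOddN G A then 1 else 0

lemma natCast_zmod_two (n : ℕ) : (n : ZMod 2) = if Odd n then 1 else 0 := by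
  rw [← ZMod.natCast_mod n 2]
  rcases Nat.mod_two_eq_zero_or_one n with h | h <;>
    simp [h, Nat.odd_iff]

lemma sum_indicator (I : Set V) (A : Set V) (hA : A ⊆ Iᶜ) (P : V → Prop) :
    (∑ v : ↥(Iᶜ), if (↑v ∈ A ∧ P ↑v) then (1 : ZMod 2) else 0)
      = ((A ∩ {x | P x}).ncard : ZMod 2) := by
  classical
  rw [Finset.sum_boole]
  congr 1
  rw [← Nat.card_coe_set_eq, Nat.card_eq_fintype_card, ← Fintype.card_subtype]
  exact Fintype.card_congr
    ⟨fun x => ⟨x.1.1, x.2⟩, fun x => ⟨⟨x.1, hA x.2.1⟩, x.2⟩,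
      fun x => rfl, fun x => rfl⟩

lemma ncard_inter_eq (A : Set V) (w : V) :
    ((A ∩ {x | x = w}).ncard : ZMod 2) = if w ∈ A then 1 else 0 := by
  by_cases hw : w ∈ A
  · have h : A ∩ {x | x = w} = {w} := by
      ext x
      simp only [Set.mem_inter_iff, Set.mem_setOf_eq, Set.mem_singleton_iff]
      exact ⟨fun h => h.2, fun h => ⟨h ▸ hw, h⟩⟩
    rw [h, Set.ncard_singleton]
    simp [hw]
  · have h : A ∩ {x | x = w} = ∅ := by
      ext x
      simp only [Set.mem_inter_iff, Set.mem_setOf_eq, Set.mem_empty_iff_false, iff_false,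
        not_and]
      intro hx hxw
      exact hw (hxw ▸ hx)
    rw [h, Set.ncard_empty]
    simp [hw]

lemma ncard_inter_adj (G : SimpleGraph V) (A : Set V) (w : V) :
    ((A ∩ {x | G.Adj w x}).ncard : ZMod 2) = if w ∈ oddN G A then 1 else 0 := by
  rw [natCast_zmod_two]
  exact if_congr Iff.rfl rfl rfl

lemma mulVec_eval (G : SimpleGraph V) (I O : Set V) (lab : V → MLabel)
    (A : Set V) (hA : A ⊆ Iᶜ) (w : ↥(Oᶜ)) :
    (flowMat G I O lab).mulVec (indVec I A) w = tval G lab A ↑w := by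
  classical
  have hmul : ∀ (p q : Prop) [Decidable p] [Decidable q],
      (if p then (1 : ZMod 2) else 0) * (if q then 1 else 0)
        = if q ∧ p then 1 else 0 := by
    intro p q _ _
    by_cases hp : p <;> by_cases hq : q <;> simp [hp, hq]
  rcases hl : lab ↑w with _ | _ | _ | _ | _ | _ <;>
    simp only [Matrix.mulVec, dotProduct, flowMat, rowOf, indVec, tval, hl] <;>
    simp_rw [hmul]
  · -- X : adjacency row
    rw [sum_indicator I A hA (fun x => G.Adj ↑w x)]
    exact ncard_inter_adj G A ↑w
  · -- Y : adjacency + identity row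
    have hsplit : ∀ x : V, (if (x ∈ A ∧ (G.Adj ↑w x ∨ x = ↑w)) then (1 : ZMod 2) else 0)
        = (if (x ∈ A ∧ G.Adj ↑w x) then 1 else 0) + (if (x ∈ A ∧ x = ↑w) then 1 else 0) := by
      intro x
      by_cases h2 : x = ↑w
      · have hna : ¬ G.Adj ↑w x := by rw [h2]; exact G.irrefl
        by_cases h3 : x ∈ A <;> simp [h2, h3, hna]
      · by_cases h1 : G.Adj ↑w x <;> by_cases h3 : x ∈ A <;> simp [h1, h2, h3]
    simp_rw [hsplit]
    rw [Finset.sum_add_distrib, sum_indicator I A hA (fun x => G.Adj ↑w x),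
      sum_indicator I A hA (fun x => x = ↑w),
      ncard_inter_adj G A ↑w, ncard_inter_eq A ↑w]
    by_cases ho : ↑w ∈ oddN G A <;> by_cases ha : ↑w ∈ A <;>
      simp [cOddN, Set.mem_symmDiff, ho, ha] <;> decide
  · -- Z
    rw [sum_indicator I A hA (fun x => x = ↑w)]
    exact ncard_inter_eq A ↑w
  · -- XY
    rw [sum_indicator I A hA (fun x => G.Adj ↑w x)]
    exact ncard_inter_adj G A ↑w
  · -- XZ
    rw [sum_indicator I A hA (fun x => x = ↑w)]
    exact ncard_inter_eq A ↑w
  · -- YZ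
    rw [sum_indicator I A hA (fun x => x = ↑w)]
    exact ncard_inter_eq A ↑w

lemma key_lemma {G : SimpleGraph V} {I O : Set V} {lab : V → MLabel}
    {c : V → Set V} {prec : V → V → Prop}
    (h : IsFocusedPauliFlow G I O lab c prec) (u : ↥(Oᶜ)) :
    (flowMat G I O lab).mulVec (indVec I (c ↑u)) = Pi.single u 1 := by
  classical
  obtain ⟨hp, hf⟩ := h
  have hu : (↑u : V) ∉ O := u.2
  have hsub : c ↑u ⊆ Iᶜ := hp.corr_sub _ hu
  funext w
  rw [mulVec_eval G I O lab _ hsub, Pi.single_apply]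
  by_cases hw : w = u
  · subst hw
    rcases hl : lab ↑w with _ | _ | _ | _ | _ | _ <;> simp only [tval, hl, if_pos rfl]
    · exact if_pos (hp.p7 _ hu hl)
    · exact if_pos (hp.p9 _ hu hl)
    · exact if_pos (hp.p8 _ hu hl)
    · exact if_pos (hp.p4 _ hu hl).2
    · exact if_pos (hp.p5 _ hu hl).1
    · exact if_pos (hp.p6 _ hu hl).1
  · have hne : (↑w : V) ≠ ↑u := fun h => hw (Subtype.ext h)
    have hwS : (↑w : V) ∈ Oᶜ \ {↑u} := ⟨w.2, by simpa using hne⟩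
    obtain ⟨f1, f2, f3⟩ := hf ↑u hu
    rcases hl : lab ↑w with _ | _ | _ | _ | _ | _ <;> simp only [tval, hl, if_neg hw]
    · -- X : not in oddN
      rw [if_neg]
      intro hmem
      have := f2 ↑w ⟨hwS, hmem⟩
      simp [hl] at this
    · -- Y : not in cOddN
      exact if_neg (f3 ↑w hwS hl)
    · -- Z : not in A
      rw [if_neg]
      intro hmem
      have := f1 ↑w ⟨hwS, hmem⟩
      simp [hl] at this
    · -- XY : not in oddN
      rw [if_neg]
      intro hmem
      have := f2 ↑w ⟨hwS, hmem⟩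
      simp [hl] at this
    · -- XZ : not in A
      rw [if_neg]
      intro hmem
      have := f1 ↑w ⟨hwS, hmem⟩
      simp [hl] at this
    · -- YZ : not in A
      rw [if_neg]
      intro hmem
      have := f1 ↑w ⟨hwS, hmem⟩
      simp [hl] at this

end Aux

/-- if `|I| = |O|` and the labelled open graph has a Pauli flow,
then the focused correction function is unique. -/
theorem focused_pauli_flow_unique {V : Type*} [Fintype V]
    (G : SimpleGraph V) (I O : Set V) (lab : V → MLabel)
    (hIO : I.ncard = O.ncard)
    (hex : HasPauliFlow G I O lab)
    (c₁ : V → Set V) (prec₁ : V → V → Prop)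
    (c₂ : V → Set V) (prec₂ : V → V → Prop)
    (h₁ : IsFocusedPauliFlow G I O lab c₁ prec₁)
    (h₂ : IsFocusedPauliFlow G I O lab c₂ prec₂) :
    ∀ v, v ∉ O → c₁ v = c₂ v := by
  classical
  intro v hv
  set f := (flowMat G I O lab).mulVecLin with hf
  -- surjectivity of f, using the focused flow h₁
  have hsurj : Function.Surjective f := by
    intro y
    refine ⟨∑ u : ↥(Oᶜ), y u • indVec I (c₁ ↑u), ?_⟩
    rw [map_sum]
    have : ∀ u : ↥(Oᶜ), f (y u • indVec I (c₁ ↑u)) = Pi.single u (y u) := by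
      intro u
      rw [map_smul, hf, Matrix.mulVecLin_apply, key_lemma h₁ u]
      funext w
      by_cases hw : w = u <;> simp [Pi.single_apply, hw]
    simp_rw [this]
    exact Finset.univ_sum_single y
  -- cardinalities match
  have hcard : Fintype.card ↥(Iᶜ) = Fintype.card ↥(Oᶜ) := by
    have h1 := Set.ncard_add_ncard_compl I
    have h2 := Set.ncard_add_ncard_compl O
    have e1 : Fintype.card ↥(Iᶜ) = (Iᶜ : Set V).ncard := by
      rw [← Nat.card_coe_set_eq, Nat.card_eq_fintype_card]
    have e2 : Fintype.card ↥(Oᶜ) = (Oᶜ : Set V).ncard := by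
      rw [← Nat.card_coe_set_eq, Nat.card_eq_fintype_card]
    omega
  have hinj : Function.Injective f := by
    have hrank : Module.finrank (ZMod 2) (↥(Iᶜ) → ZMod 2)
        = Module.finrank (ZMod 2) (↥(Oᶜ) → ZMod 2) := by
      rw [Module.finrank_pi, Module.finrank_pi, hcard]
    exact (LinearMap.injective_iff_surjective_of_finrank_eq_finrank hrank).mpr hsurj
  -- the two indicator vectors agree
  have heq : indVec I (c₁ v) = indVec I (c₂ v) := by
    apply hinj
    rw [hf, Matrix.mulVecLin_apply, Matrix.mulVecLin_apply,
      key_lemma h₁ ⟨v, hv⟩, key_lemma h₂ ⟨v, hv⟩]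
  -- conclude set equality
  ext x
  by_cases hx : x ∈ I
  · constructor
    · intro hmem
      exact absurd (h₁.1.corr_sub v hv hmem) (by simpa using hx)
    · intro hmem
      exact absurd (h₂.1.corr_sub v hv hmem) (by simpa using hx)
  · have := congrFun heq ⟨x, hx⟩
    simp only [indVec] at this
    by_cases h1 : x ∈ c₁ v <;> by_cases h2 : x ∈ c₂ v <;>
      simp_all [h1, h2]

end
end
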